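/- Let ν⁺ = Law(exp(Z−1/2)) and ν⁻ = Law(−exp(Z−1/2)) for Z standard Gaussian, μ = (δ₁ + δ₋₁)/2, ν = (ν⁺ + ν⁻)/2. Then there is no convex function v : ℝ → ℝ with ∇v(B₁) square-integrable and a Bass measure α such that the Bass martingale M_t = E[v'(B₁)|B_t] satisfies Law(M₀) = μ and Law(M₁) = ν; i.e., (μ,ν) is not irreducible. Indeed, for any martingale coupling π ∈ MT(μ,ν), the conditional law π₁ is concentrated on (0,∞) and π₋₁ on (−∞,0). -/

import Mathlib

open MeasureTheory ProbabilityTheory Set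
open scoped ENNReal

noncomputable section

/-- Law of `exp(Z - 1/2)`, `Z` standard Gaussian. -/
def nuP : Measure ℝ := (gaussianReal 0 1).map (fun z => Real.exp (z - 1/2))

/-- Law of `-exp(Z - 1/2)`, `Z` standard Gaussian. -/
def nuM : Measure ℝ := (gaussianReal 0 1).map (fun z => -Real.exp (z - 1/2))

/-- `μ = (δ₁ + δ₋₁)/2`. -/
def muEx : Measure ℝ := (2 : ℝ≥0∞)⁻¹ • (Measure.dirac (1 : ℝ) + Measure.dirac (-1 : ℝ))

/-- `ν = (ν⁺ + ν⁻)/2`. -/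
def nuEx : Measure ℝ := (2 : ℝ≥0∞)⁻¹ • (nuP + nuM)

/-- `κf` is the kernel of a martingale coupling from `p` to `q`. -/
def MTker1 (p q : Measure ℝ) (κf : ℝ → Measure ℝ) : Prop :=
  (∀ x, IsProbabilityMeasure (κf x)) ∧ Measurable κf ∧ p.bind κf = q ∧
    ∀ᵐ x ∂p, Integrable (fun y => y) (κf x) ∧ (∫ y, y ∂(κf x)) = x

open scoped NNReal

/-!
Since `|·|` is affine on each half-line, Jensen gives `∫ |y| dκₓ ≥ |x|` for a martingale kernel
`κ`, while `∫ |y| dν = 1 = ∫ |x| dμ`. Hence equality holds for `μ`-a.e. `x`, which forces `κₓ` onto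
the closed half-line of the sign of `x`, and onto the open one because `ν` has no atom at `0`.
A Bass martingale started from `α` is such a mixture too, with `κ_b` the law of `g` under
`N(b, 1)`; but these laws are mutually absolutely continuous for different `b`, so they cannot
be carried by `(0, ∞)` for some `b` and by `(-∞, 0)` for others.
-/

theorem ae_lintegral_enorm_eq_enorm_integral_of_lintegral_bind_le {β : Type*} [MeasurableSpace β]
    {E : Type*} [NormedAddCommGroup E] [NormedSpace ℝ E] [MeasurableSpace E]
    [OpensMeasurableSpace E] {α : Measure β} {κ : β → Measure E} (hκ : Measurable κ)
    (hfin : ∫⁻ b, ‖∫ y, y ∂κ b‖ₑ ∂α ≠ ∞)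
    (hle : ∫⁻ y, ‖y‖ₑ ∂α.bind κ ≤ ∫⁻ b, ‖∫ y, y ∂κ b‖ₑ ∂α) :
    ∀ᵐ b ∂α, ∫⁻ y, ‖y‖ₑ ∂κ b = ‖∫ y, y ∂κ b‖ₑ := by
  have hmeas : Measurable fun b => ∫⁻ y, ‖y‖ₑ ∂κ b :=
    (Measure.measurable_lintegral measurable_enorm).comp hκ
  rw [Measure.lintegral_bind hκ.aemeasurable measurable_enorm.aemeasurable] at hle
  filter_upwards [ae_eq_of_ae_le_of_lintegral_le
    (ae_of_all _ fun b => enorm_integral_le_lintegral_enorm _) hfin hmeas.aemeasurable hle]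
    with b hb using hb.symm

theorem ae_zero_le_mul_integral_of_lintegral_enorm_eq {ρ : Measure ℝ}
    (h : ∫⁻ y, ‖y‖ₑ ∂ρ = ‖∫ y, y ∂ρ‖ₑ) : ∀ᵐ y ∂ρ, 0 ≤ y * ∫ y, y ∂ρ := by
  set m := ∫ y, y ∂ρ
  have hint : Integrable (fun y => y) ρ :=
    ⟨aestronglyMeasurable_id, by rw [HasFiniteIntegral, h]; exact enorm_lt_top⟩
  have habs : ∫ y, |y| ∂ρ = |m| := by
    rw [← Real.norm_eq_abs m, ← toReal_enorm, ← h, ← integral_norm_eq_lintegral_enorm hint.1]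
    rfl
  have hgap : ∫ y, (|y * m| - y * m) ∂ρ = 0 := by
    simp_rw [abs_mul]
    rw [integral_sub (hint.abs.mul_const _) (hint.mul_const _), integral_mul_const,
      integral_mul_const, habs, abs_mul_abs_self, sub_self]
  filter_upwards [(integral_eq_zero_iff_of_nonneg (fun y => sub_nonneg.2 (le_abs_self _))
    ((hint.mul_const m).abs.sub (hint.mul_const m))).1 hgap] with y hy
  have hy : |y * m| - y * m = 0 := hy
  linarith [abs_nonneg (y * m)]

theorem ae_ae_zero_le_mul_integral_of_lintegral_bind_le {β : Type*} [MeasurableSpace β]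
    {α : Measure β} {κ : β → Measure ℝ} (hκ : Measurable κ) (hfin : ∫⁻ b, ‖∫ y, y ∂κ b‖ₑ ∂α ≠ ∞)
    (hle : ∫⁻ y, ‖y‖ₑ ∂α.bind κ ≤ ∫⁻ b, ‖∫ y, y ∂κ b‖ₑ ∂α) :
    ∀ᵐ b ∂α, ∀ᵐ y ∂κ b, 0 ≤ y * ∫ y, y ∂κ b := by
  filter_upwards [ae_lintegral_enorm_eq_enorm_integral_of_lintegral_bind_le hκ hfin hle]
    with b hb using ae_zero_le_mul_integral_of_lintegral_enorm_eq hb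

lemma nuM_eq_map_neg : nuM = nuP.map Neg.neg := by
  rw [nuP, Measure.map_map measurable_neg (by fun_prop)]
  rfl

lemma lintegral_enorm_nuP : ∫⁻ y, ‖y‖ₑ ∂nuP = 1 := by
  have hexp : ∫ z, Real.exp (z - 1/2) ∂gaussianReal 0 1 = 1 := by
    have hmgf := congrFun (mgf_id_gaussianReal (μ := 0) (v := 1)) 1
    simp only [mgf, id, one_mul, zero_mul, zero_add, NNReal.coe_one, one_pow] at hmgf
    simp_rw [Real.exp_sub, integral_div, hmgf, one_div, div_self (Real.exp_pos _).ne']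
  have hint : Integrable (fun z => Real.exp (z - 1/2)) (gaussianReal 0 1) := by
    simp_rw [Real.exp_sub]
    simpa using (integrable_exp_mul_gaussianReal (μ := 0) (v := 1) 1).div_const (Real.exp (1/2))
  rw [nuP, lintegral_map measurable_enorm (by fun_prop)]
  simp_rw [Real.enorm_eq_ofReal (Real.exp_pos _).le]
  rw [← ofReal_integral_eq_lintegral_ofReal hint (ae_of_all _ fun _ => (Real.exp_pos _).le), hexp,
    ENNReal.ofReal_one]

lemma ae_nuP_pos : ∀ᵐ y ∂nuP, 0 < y :=
  (ae_map_iff (by fun_prop) measurableSet_Ioi).2 (ae_of_all _ fun _ => Real.exp_pos _)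

lemma ae_nuM_neg : ∀ᵐ y ∂nuM, y < 0 := by
  rw [nuM_eq_map_neg]
  exact (ae_map_iff measurable_neg.aemeasurable measurableSet_Iio).2
    (ae_nuP_pos.mono fun _ => neg_neg_of_pos)

lemma lintegral_enorm_nuEx : ∫⁻ y, ‖y‖ₑ ∂nuEx = 1 := by
  have hM : ∫⁻ y, ‖y‖ₑ ∂nuM = 1 := by
    rw [nuM_eq_map_neg, lintegral_map measurable_enorm measurable_neg]
    simpa only [enorm_neg] using lintegral_enorm_nuP
  simp [nuEx, lintegral_add_measure, lintegral_enorm_nuP, hM, ENNReal.inv_two_add_inv_two]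

lemma ae_nuEx_ne_zero : ∀ᵐ y ∂nuEx, y ≠ 0 := by
  rw [nuEx, Measure.ae_ennreal_smul_measure_iff (by simp), ae_add_measure_iff]
  exact ⟨ae_nuP_pos.mono fun _ => ne_of_gt, ae_nuM_neg.mono fun _ => ne_of_lt⟩

instance : IsProbabilityMeasure nuM := Measure.isProbabilityMeasure_map (by fun_prop)

lemma nuEx_Iio_ne_zero : nuEx (Iio 0) ≠ 0 := by
  have hM : nuM (Iio 0) = 1 := (mem_ae_iff_prob_eq_one measurableSet_Iio).1 ae_nuM_neg
  simp [nuEx, hM]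

lemma ae_muEx {p : ℝ → Prop} : (∀ᵐ x ∂muEx, p x) ↔ p 1 ∧ p (-1) := by
  simp [muEx, ae_add_measure_iff, ae_dirac_eq]

lemma aemeasurable_muEx {γ : Type*} [MeasurableSpace γ] (f : ℝ → γ) : AEMeasurable f muEx :=
  (aemeasurable_dirac.add_measure aemeasurable_dirac).smul_measure _

lemma lintegral_enorm_muEx : ∫⁻ x, ‖x‖ₑ ∂muEx = 1 := by
  simp [muEx, lintegral_add_measure, ENNReal.inv_two_add_inv_two]

lemma muEx_singleton_one_ne_zero : muEx {1} ≠ 0 := by simp [muEx]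

lemma muEx_singleton_neg_one_ne_zero : muEx {-1} ≠ 0 := by simp [muEx]

theorem ae_ae_zero_lt_mul_integral_of_map_eq_muEx_of_bind_eq_nuEx {β : Type*}
    [MeasurableSpace β] {α : Measure β} {κ : β → Measure ℝ} (hκ : Measurable κ)
    (hm : AEMeasurable (fun b => ∫ y, y ∂κ b) α) (hμ : α.map (fun b => ∫ y, y ∂κ b) = muEx)
    (hν : α.bind κ = nuEx) :
    ∀ᵐ b ∂α, ∀ᵐ y ∂κ b, 0 < y * ∫ y, y ∂κ b := by
  have habs_mean : ∫⁻ b, ‖∫ y, y ∂κ b‖ₑ ∂α = 1 := by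
    rw [← lintegral_enorm_muEx, ← hμ, lintegral_map' measurable_enorm.aemeasurable hm]
  have hsign := ae_ae_zero_le_mul_integral_of_lintegral_bind_le hκ
    (habs_mean ▸ ENNReal.one_ne_top) (by rw [habs_mean, hν, lintegral_enorm_nuEx])
  have hmean_ne : ∀ᵐ b ∂α, ∫ y, y ∂κ b ≠ 0 :=
    ae_of_ae_map hm (hμ ▸ ae_muEx (p := (· ≠ 0)) |>.2 ⟨one_ne_zero, by norm_num⟩)
  filter_upwards [hsign, Measure.ae_ae_of_ae_bind hκ.aemeasurable (hν ▸ ae_nuEx_ne_zero), hmean_ne]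
    with b hb hb_ne hb_mean
  filter_upwards [hb, hb_ne] with y hy hy_ne
  exact hy.lt_of_ne (mul_ne_zero hy_ne hb_mean).symm

theorem MTker1.ae_ae_zero_lt_mul {κ : ℝ → Measure ℝ} (h : MTker1 muEx nuEx κ) :
    ∀ᵐ x ∂muEx, ∀ᵐ y ∂κ x, 0 < y * x := by
  obtain ⟨-, hκ, hbind, hmart⟩ := h
  have hmean : (fun x => ∫ y, y ∂κ x) =ᵐ[muEx] id := hmart.mono fun x hx => hx.2
  filter_upwards [ae_ae_zero_lt_mul_integral_of_map_eq_muEx_of_bind_eq_nuEx hκ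
    (aemeasurable_muEx _) (by rw [Measure.map_congr hmean, Measure.map_id]) hbind, hmean]
    with x hx hx_mean
  rwa [hx_mean] at hx

lemma gaussianReal_eq_map_const_add (b : ℝ) (v : ℝ≥0) :
    gaussianReal b v = (gaussianReal 0 v).map (b + ·) := by
  rw [gaussianReal_map_const_add, zero_add]

lemma gaussianReal_map_absolutelyContinuous {g : ℝ → ℝ} (hg : Measurable g) (a b : ℝ)
    {v w : ℝ≥0} (hv : v ≠ 0) (hw : w ≠ 0) :
    (gaussianReal a v).map g ≪ (gaussianReal b w).map g :=
  ((gaussianReal_absolutelyContinuous a hv).trans (gaussianReal_absolutelyContinuous' b hw)).map hg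

lemma measurable_gaussianReal_map {g : ℝ → ℝ} (hg : Measurable g) (v : ℝ≥0) :
    Measurable fun b : ℝ => (gaussianReal b v).map g :=
  (Measure.measurable_map g hg).comp
    (measurable_gaussianReal.comp (measurable_id.prodMk measurable_const))

lemma integral_gaussianReal_map {g : ℝ → ℝ} (hg : Measurable g) (b : ℝ) (v : ℝ≥0) :
    ∫ y, y ∂(gaussianReal b v).map g = ∫ y, g (b + y) ∂gaussianReal 0 v := by
  rw [integral_map (f := fun y => y) hg.aemeasurable (by fun_prop), gaussianReal_eq_map_const_add,
    integral_map (by fun_prop) hg.aestronglyMeasurable]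

lemma bind_gaussianReal_map {g : ℝ → ℝ} (hg : Measurable g) (α : Measure ℝ) (v : ℝ≥0) :
    α.bind (fun b => (gaussianReal b v).map g) =
      (α.prod (gaussianReal 0 v)).map (fun p => g (p.1 + p.2)) := by
  ext s hs
  have hG : Measurable fun p : ℝ × ℝ => g (p.1 + p.2) := hg.comp measurable_add
  rw [Measure.bind_apply hs (measurable_gaussianReal_map hg v).aemeasurable,
    Measure.map_apply hG hs, Measure.prod_apply (hG hs)]
  refine lintegral_congr fun b => ?_
  rw [Measure.map_apply hg hs, gaussianReal_eq_map_const_add,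
    Measure.map_apply (by fun_prop) (hg hs)]
  rfl

theorem no_bass_representation_muEx_nuEx {α : Measure ℝ} {g : ℝ → ℝ} (hg : Measurable g)
    (hμ : muEx = α.map (fun b => ∫ y, g (b + y) ∂gaussianReal 0 1))
    (hν : nuEx = (α.prod (gaussianReal 0 1)).map (fun p => g (p.1 + p.2))) : False := by
  set f := fun b => ∫ y, g (b + y) ∂gaussianReal 0 1
  have hf : Measurable f :=
    (hg.comp measurable_add).stronglyMeasurable.integral_prod_right'.measurable
  have hmean_at (b : ℝ) : ∫ y, y ∂(gaussianReal b 1).map g = f b :=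
    integral_gaussianReal_map hg b 1
  have hmean : (fun b => ∫ y, y ∂(gaussianReal b 1).map g) = f := funext hmean_at
  have hpin := ae_ae_zero_lt_mul_integral_of_map_eq_muEx_of_bind_eq_nuEx
    (measurable_gaussianReal_map hg 1) (hmean ▸ hf.aemeasurable) (by rw [hmean, hμ])
    (by rw [hν, bind_gaussianReal_map hg])
  simp only [hmean_at] at hpin
  have hfiber (x : ℝ) (hx : muEx {x} ≠ 0) : α (f ⁻¹' {x}) ≠ 0 := by
    rwa [hμ, Measure.map_apply hf (measurableSet_singleton x)] at hx
  obtain ⟨bp, hbp, hpos⟩ := Measure.exists_mem_of_measure_ne_zero_of_ae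
    (hfiber 1 muEx_singleton_one_ne_zero) (ae_restrict_of_ae hpin)
  obtain ⟨bm, hbm, hneg⟩ := Measure.exists_mem_of_measure_ne_zero_of_ae
    (hfiber (-1) muEx_singleton_neg_one_ne_zero) (ae_restrict_of_ae hpin)
  rw [mem_preimage, mem_singleton_iff] at hbp hbm
  rw [hbp] at hpos
  rw [hbm] at hneg
  have : IsProbabilityMeasure ((gaussianReal bp 1).map g) :=
    Measure.isProbabilityMeasure_map hg.aemeasurable
  obtain ⟨y, hy_pos, hy_neg⟩ :=
    (hpos.and ((gaussianReal_map_absolutelyContinuous hg bp bm one_ne_zero one_ne_zero).ae_le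
      hneg)).exists
  linarith

/-- The pair `(μ, ν) = ((δ₁+δ₋₁)/2, (ν⁺+ν⁻)/2)` admits no Bass martingale and is not
irreducible: every martingale coupling sends the mass at `1` into `(0,∞)` and the mass
at `-1` into `(-∞,0)`, and no martingale coupling can charge `{1} × (-∞,0)`. -/
theorem mirrored_gbm_not_irreducible :
    -- conditional supports are pinned for every martingale coupling
    (∀ κf : ℝ → Measure ℝ, MTker1 muEx nuEx κf →
      ∀ᵐ x ∂muEx, (x = 1 → κf x (Set.Ioi (0 : ℝ)) = 1) ∧
        (x = -1 → κf x (Set.Iio (0 : ℝ)) = 1)) ∧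
    -- (μ,ν) is not irreducible
    ¬ (∀ A B : Set ℝ, MeasurableSet A → MeasurableSet B →
        0 < muEx A → 0 < nuEx B →
        ∃ κf : ℝ → Measure ℝ, MTker1 muEx nuEx κf ∧
          0 < (muEx.bind fun x => (κf x).map (fun y => (x, y))) (A ×ˢ B)) ∧
    -- there is no Bass martingale from μ to ν
    ¬ (∃ (α : Measure ℝ) (_ : IsProbabilityMeasure α) (v : ℝ → ℝ) (g : ℝ → ℝ),
        ConvexOn ℝ Set.univ v ∧ Measurable g ∧
        (∀ᵐ x ∂(Measure.map (fun p : ℝ × ℝ => p.1 + p.2) (α.prod (gaussianReal 0 1))),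
          HasDerivAt v (g x) x) ∧
        muEx = Measure.map (fun b => ∫ y, g (b + y) ∂(gaussianReal 0 1)) α ∧
        nuEx = Measure.map (fun p : ℝ × ℝ => g (p.1 + p.2)) (α.prod (gaussianReal 0 1))) := by
  refine ⟨fun κ hκ => ?_, fun hirr => ?_, ?_⟩
  · have hpin := ae_muEx.1 hκ.ae_ae_zero_lt_mul
    have := hκ.1 1
    have := hκ.1 (-1)
    refine ae_muEx.2 ⟨⟨fun _ => ?_, by norm_num⟩, ⟨by norm_num, fun _ => ?_⟩⟩
    · exact (mem_ae_iff_prob_eq_one measurableSet_Ioi).1 (hpin.1.mono fun y hy => by simpa using hy)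
    · exact (mem_ae_iff_prob_eq_one measurableSet_Iio).1 (hpin.2.mono fun y hy => by simpa using hy)
  · obtain ⟨κ, hκ, hpos⟩ := hirr {1} (Iio 0) (measurableSet_singleton 1) measurableSet_Iio
      (pos_iff_ne_zero.2 muEx_singleton_one_ne_zero) (pos_iff_ne_zero.2 nuEx_Iio_ne_zero)
    refine hpos.ne' ?_
    have hs : MeasurableSet (({1} : Set ℝ) ×ˢ Iio (0 : ℝ)) :=
      (measurableSet_singleton 1).prod measurableSet_Iio
    rw [Measure.bind_apply hs (aemeasurable_muEx _)]
    refine (lintegral_congr_ae ?_).trans lintegral_zero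
    filter_upwards [hκ.ae_ae_zero_lt_mul] with x hx
    rw [Measure.map_apply measurable_prodMk_left hs]
    refine measure_mono_null (fun y hy => ?_) (ae_iff.1 hx)
    obtain ⟨rfl : x = 1, hy : y < 0⟩ := hy
    simpa using hy.le
  · rintro ⟨α, -, -, g, -, hg, -, hμ, hν⟩
    exact no_bass_representation_muEx_nuEx hg hμ hν
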